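/- arXiv:math/0110109 — 4 statements merged into one kernel-verified Lean document; each statement's English description precedes it below -/
import Mathlib

section
/- Let C and D be categories, each equipped with a distinguished class of morphisms S (in C) and T (in D). Let f : C ⥤ D be a functor with f(S) ⊆ T, and suppose there exists a functor g : D ⥤ C with g(T) ⊆ S, together with endofunctors A of D and B of C and natural transformations f∘g ⟸ A ⟹ 𝟭_D and g∘f ⟸ B ⟹ 𝟭_C such that for every object y of D the components A(y) → f(g(y)) and A(y) → y lie in T, and for every object x of C the components B(x) → g(f(x)) and B(x) → x lie in S. Then the induced functor on localizations C[S⁻¹] ⥤ D[T⁻¹] is an equivalence of categories. -/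
open CategoryTheory

/-- If `f : C ⥤ D` sends `S` into `T` and admits a "homotopy inverse" `g` in the sense of
Dwyer–Kan (connected to the identities through zig-zags of natural transformations whose
components lie in `S` resp. `T`), then the induced functor on localizations
`C[S⁻¹] ⥤ D[T⁻¹]` is an equivalence of categories. -/
theorem stmt0 {C D : Type*} [Category C] [Category D]
    (S : MorphismProperty C) (T : MorphismProperty D)
    (f : C ⥤ D) (hf : ∀ ⦃x y : C⦄ (s : x ⟶ y), S s → T (f.map s))
    (g : D ⥤ C) (hg : ∀ ⦃x y : D⦄ (t : x ⟶ y), T t → S (g.map t))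
    (A : D ⥤ D) (B : C ⥤ C)
    (α₁ : A ⟶ g ⋙ f) (α₂ : A ⟶ 𝟭 D)
    (β₁ : B ⟶ f ⋙ g) (β₂ : B ⟶ 𝟭 C)
    (hα₁ : ∀ y : D, T (α₁.app y)) (hα₂ : ∀ y : D, T (α₂.app y))
    (hβ₁ : ∀ x : C, S (β₁.app x)) (hβ₂ : ∀ x : C, S (β₂.app x)) :
    (Localization.lift (f ⋙ T.Q)
      (fun _ _ s hs => Localization.inverts T.Q T (f.map s) (hf s hs)) S.Q).IsEquivalence := by
  set F := Localization.lift (f ⋙ T.Q)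
      (fun _ _ s hs => Localization.inverts T.Q T (f.map s) (hf s hs)) S.Q with hF
  set G := Localization.lift (g ⋙ S.Q)
      (fun _ _ t ht => Localization.inverts S.Q S (g.map t) (hg t ht)) T.Q with hG
  have eF : S.Q ⋙ F ≅ f ⋙ T.Q := Localization.fac _ _ _
  have eG : T.Q ⋙ G ≅ g ⋙ S.Q := Localization.fac _ _ _
  -- zig-zag isos
  haveI : ∀ x : C, IsIso ((Functor.whiskerRight β₁ S.Q).app x) := fun x =>
    Localization.inverts S.Q S _ (hβ₁ x)
  haveI : ∀ x : C, IsIso ((Functor.whiskerRight β₂ S.Q).app x) := fun x =>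
    Localization.inverts S.Q S _ (hβ₂ x)
  haveI : IsIso (Functor.whiskerRight β₁ S.Q) := NatIso.isIso_of_isIso_app _
  haveI : IsIso (Functor.whiskerRight β₂ S.Q) := NatIso.isIso_of_isIso_app _
  haveI : ∀ y : D, IsIso ((Functor.whiskerRight α₁ T.Q).app y) := fun y =>
    Localization.inverts T.Q T _ (hα₁ y)
  haveI : ∀ y : D, IsIso ((Functor.whiskerRight α₂ T.Q).app y) := fun y =>
    Localization.inverts T.Q T _ (hα₂ y)
  haveI : IsIso (Functor.whiskerRight α₁ T.Q) := NatIso.isIso_of_isIso_app _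
  haveI : IsIso (Functor.whiskerRight α₂ T.Q) := NatIso.isIso_of_isIso_app _
  have iβ : (f ⋙ g) ⋙ S.Q ≅ S.Q :=
    (asIso (Functor.whiskerRight β₁ S.Q)).symm ≪≫ asIso (Functor.whiskerRight β₂ S.Q) ≪≫
      Functor.leftUnitor _
  have iα : (g ⋙ f) ⋙ T.Q ≅ T.Q :=
    (asIso (Functor.whiskerRight α₁ T.Q)).symm ≪≫ asIso (Functor.whiskerRight α₂ T.Q) ≪≫
      Functor.leftUnitor _
  have e₁ : S.Q ⋙ (F ⋙ G) ≅ S.Q :=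
    (Functor.associator _ _ _).symm ≪≫ Functor.isoWhiskerRight eF G ≪≫
      Functor.associator _ _ _ ≪≫ Functor.isoWhiskerLeft f eG ≪≫
      (Functor.associator _ _ _).symm ≪≫ iβ
  have e₂ : T.Q ⋙ (G ⋙ F) ≅ T.Q :=
    (Functor.associator _ _ _).symm ≪≫ Functor.isoWhiskerRight eG F ≪≫
      Functor.associator _ _ _ ≪≫ Functor.isoWhiskerLeft g eF ≪≫
      (Functor.associator _ _ _).symm ≪≫ iα
  letI : Localization.Lifting S.Q S S.Q (F ⋙ G) := ⟨e₁⟩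
  letI : Localization.Lifting T.Q T T.Q (G ⋙ F) := ⟨e₂⟩
  have i₁ : F ⋙ G ≅ 𝟭 _ :=
    Localization.liftNatIso S.Q S S.Q S.Q (F ⋙ G) (𝟭 _) (Iso.refl _)
  have i₂ : G ⋙ F ≅ 𝟭 _ :=
    Localization.liftNatIso T.Q T T.Q T.Q (G ⋙ F) (𝟭 _) (Iso.refl _)
  exact (CategoryTheory.Equivalence.mk F G i₁.symm i₂).isEquivalence_functor
end

section
/- Let X : Δᵒᵖ → Set be a simplicial set such that for every n ≥ 2 the Segal map X_n → X_1 ×_{X_0} X_1 ×_{X_0} ⋯ ×_{X_0} X_1 (n factors, given by the inclusions of the spine edges) is a bijection. Then there is a category C with objects X_0 and morphisms X_1 such that X is isomorphic to the nerve of C. -/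
open CategoryTheory Simplicial

namespace Stmt7Aux

open SSet SimplexCategory CategoryTheory.SimplicialObject

universe u

/-! ### SimplexCategory lemmas -/

lemma hom1_ext {n : SimplexCategory} (e e' : (⦋1⦌ : SimplexCategory) ⟶ n)
    (h0 : e.toOrderHom 0 = e'.toOrderHom 0) (h1 : e.toOrderHom 1 = e'.toOrderHom 1) :
    e = e' := by
  apply SimplexCategory.Hom.ext'
  apply OrderHom.ext
  funext x
  fin_cases x <;> assumption

@[simp] lemma mkOfLe_zero {n : ℕ} (a b : Fin (n + 1)) (h : a ≤ b) :
    (mkOfLe a b h).toOrderHom 0 = a := rfl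

@[simp] lemma mkOfLe_one {n : ℕ} (a b : Fin (n + 1)) (h : a ≤ b) :
    (mkOfLe a b h).toOrderHom 1 = b := rfl

lemma δ_one_comp_mkOfLe {n : ℕ} (a b : Fin (n + 1)) (h : a ≤ b) :
    (SimplexCategory.δ 1 : (⦋0⦌ : SimplexCategory) ⟶ ⦋1⦌) ≫ mkOfLe a b h
      = SimplexCategory.const ⦋0⦌ ⦋n⦌ a := by
  apply SimplexCategory.Hom.ext'
  apply OrderHom.ext
  funext x
  fin_cases x
  rfl

lemma δ_zero_comp_mkOfLe {n : ℕ} (a b : Fin (n + 1)) (h : a ≤ b) :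
    (SimplexCategory.δ 0 : (⦋0⦌ : SimplexCategory) ⟶ ⦋1⦌) ≫ mkOfLe a b h
      = SimplexCategory.const ⦋0⦌ ⦋n⦌ b := by
  apply SimplexCategory.Hom.ext'
  apply OrderHom.ext
  funext x
  fin_cases x
  rfl

lemma mkOfSucc_zero_comp_mkOfLeComp {n : ℕ} (a b c : Fin (n + 1)) (hab : a ≤ b) (hbc : b ≤ c) :
    mkOfSucc 0 ≫ mkOfLeComp a b c hab hbc = mkOfLe a b hab := by
  apply hom1_ext <;> rfl

lemma mkOfSucc_one_comp_mkOfLeComp {n : ℕ} (a b c : Fin (n + 1)) (hab : a ≤ b) (hbc : b ≤ c) :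
    mkOfSucc 1 ≫ mkOfLeComp a b c hab hbc = mkOfLe b c hbc := by
  apply hom1_ext <;> rfl

lemma diag_comp_mkOfLeComp {n : ℕ} (a b c : Fin (n + 1)) (hab : a ≤ b) (hbc : b ≤ c) :
    diag 2 ≫ mkOfLeComp a b c hab hbc = mkOfLe a c (hab.trans hbc) := by
  apply hom1_ext <;> rfl

lemma mkOfLe_self {n : ℕ} (a : Fin (n + 1)) (h : a ≤ a) :
    mkOfLe a a h = SimplexCategory.const ⦋1⦌ ⦋n⦌ a := by
  apply hom1_ext <;> rfl

lemma mkOfSucc_eq_mkOfLe {n : ℕ} (i : Fin n) :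
    mkOfSucc i = mkOfLe i.castSucc i.succ (Fin.castSucc_le_succ i) := by
  apply hom1_ext <;> rfl

lemma mkOfLe_zero_one : mkOfLe (0 : Fin 2) 1 (by decide) = 𝟙 (⦋1⦌ : SimplexCategory) := by
  apply hom1_ext
  · rfl
  · rfl

lemma σ_comp_const {n : ℕ} (a : Fin (n + 1)) :
    (SimplexCategory.σ 0 : (⦋1⦌ : SimplexCategory) ⟶ ⦋0⦌) ≫ SimplexCategory.const ⦋0⦌ ⦋n⦌ a
      = SimplexCategory.const ⦋1⦌ ⦋n⦌ a := by
  apply hom1_ext <;> rfl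

lemma δ_one_comp_σ_zero :
    (SimplexCategory.δ 1 : (⦋0⦌ : SimplexCategory) ⟶ ⦋1⦌) ≫ SimplexCategory.σ 0
      = 𝟙 (⦋0⦌ : SimplexCategory) := by
  apply SimplexCategory.Hom.ext'
  apply OrderHom.ext
  funext x
  fin_cases x
  rfl

lemma δ_zero_comp_σ_zero :
    (SimplexCategory.δ 0 : (⦋0⦌ : SimplexCategory) ⟶ ⦋1⦌) ≫ SimplexCategory.σ 0
      = 𝟙 (⦋0⦌ : SimplexCategory) := by
  apply SimplexCategory.Hom.ext'
  apply OrderHom.ext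
  funext x
  fin_cases x
  rfl

lemma δ_one_eq_const :
    (SimplexCategory.δ 1 : (⦋0⦌ : SimplexCategory) ⟶ ⦋1⦌) = SimplexCategory.const ⦋0⦌ ⦋1⦌ 0 := by
  apply SimplexCategory.Hom.ext'
  apply OrderHom.ext
  funext x
  fin_cases x
  rfl

lemma δ_zero_eq_const :
    (SimplexCategory.δ 0 : (⦋0⦌ : SimplexCategory) ⟶ ⦋1⦌) = SimplexCategory.const ⦋0⦌ ⦋1⦌ 1 := by
  apply SimplexCategory.Hom.ext'
  apply OrderHom.ext
  funext x
  fin_cases x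
  rfl

/-! ### Simplicial set preliminaries -/

/-- wrapper making the strict Segal structure available to instance search -/
class SegalStr (X : SSet.{u}) : Type u where
  sx : SSet.StrictSegal X

variable {X : SSet.{u}} [SegalStr X]

noncomputable def spineToSimplex {n : ℕ} (p : Path X n) : X _⦋n⦌ :=
  (SegalStr.sx (X := X)).spineToSimplex p

noncomputable def spineToDiagonal {n : ℕ} (p : Path X n) : X _⦋1⦌ :=
  SimplicialObject.diagonal X (spineToSimplex p)

lemma spineToSimplex_vertex {n : ℕ} (i : Fin (n + 1)) (f : Path X n) :
    X.map (SimplexCategory.const ⦋0⦌ ⦋n⦌ i).op (spineToSimplex f) = f.vertex i :=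
  SSet.StrictSegal.spineToSimplex_vertex _ i f

lemma spineToSimplex_arrow {n : ℕ} (i : Fin n) (f : Path X n) :
    X.map (mkOfSucc i).op (spineToSimplex f) = f.arrow i :=
  SSet.StrictSegal.spineToSimplex_arrow _ i f

lemma spineToSimplex_spine {n : ℕ} (Δ : X _⦋n⦌) : spineToSimplex (X.spine n Δ) = Δ :=
  SSet.StrictSegal.spineToSimplex_spine_apply _ Δ

/-- composite of maps -/
lemma map_map {k m n : SimplexCategory} (f : k ⟶ m) (g : m ⟶ n) (Δ : X.obj (Opposite.op n)) :
    X.map f.op (X.map g.op Δ) = X.map (f ≫ g).op Δ := by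
  rw [op_comp, FunctorToTypes.map_comp_apply]

/-- The `a`-th vertex of a simplex. -/
def vtx {n : ℕ} (Δ : X _⦋n⦌) (a : Fin (n + 1)) : X _⦋0⦌ :=
  X.map (SimplexCategory.const ⦋0⦌ ⦋n⦌ a).op Δ

/-- The edge of a simplex from vertex `a` to vertex `b`. -/
def edge {n : ℕ} (Δ : X _⦋n⦌) (a b : Fin (n + 1)) (h : a ≤ b) : X _⦋1⦌ :=
  X.map (mkOfLe a b h).op Δ

lemma edge_src {n : ℕ} (Δ : X _⦋n⦌) (a b : Fin (n + 1)) (h : a ≤ b) :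
    X.δ 1 (edge Δ a b h) = vtx Δ a := by
  dsimp only [SimplicialObject.δ, edge, vtx]
  rw [map_map, δ_one_comp_mkOfLe]

lemma edge_tgt {n : ℕ} (Δ : X _⦋n⦌) (a b : Fin (n + 1)) (h : a ≤ b) :
    X.δ 0 (edge Δ a b h) = vtx Δ b := by
  dsimp only [SimplicialObject.δ, edge, vtx]
  rw [map_map, δ_zero_comp_mkOfLe]

lemma σ_vtx {n : ℕ} (Δ : X _⦋n⦌) (a : Fin (n + 1)) :
    X.σ 0 (vtx Δ a) = edge Δ a a le_rfl := by
  dsimp only [SimplicialObject.σ, vtx, edge]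
  rw [map_map, σ_comp_const, mkOfLe_self]

lemma σ_src (x : X _⦋0⦌) : X.δ 1 (X.σ 0 x) = x := by
  dsimp only [SimplicialObject.σ, SimplicialObject.δ]
  rw [map_map, δ_one_comp_σ_zero, op_id, FunctorToTypes.map_id_apply]

lemma σ_tgt (x : X _⦋0⦌) : X.δ 0 (X.σ 0 x) = x := by
  dsimp only [SimplicialObject.σ, SimplicialObject.δ]
  rw [map_map, δ_zero_comp_σ_zero, op_id, FunctorToTypes.map_id_apply]

lemma edge_self (f : X _⦋1⦌) : edge f 0 1 (by decide) = f := by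
  dsimp only [edge]
  rw [mkOfLe_zero_one, op_id, FunctorToTypes.map_id_apply]

lemma src_eq_vtx (f : X _⦋1⦌) : X.δ 1 f = vtx f 0 := by
  dsimp only [SimplicialObject.δ, vtx]
  rw [δ_one_eq_const]

lemma tgt_eq_vtx (f : X _⦋1⦌) : X.δ 0 f = vtx f 1 := by
  dsimp only [SimplicialObject.δ, vtx]
  rw [δ_zero_eq_const]

/-! ### Paths of length 2 and composition -/

/-- The path with arrows `f`, `g`. -/
@[simps]
def mkPath2 (f g : X _⦋1⦌) (h : X.δ 0 f = X.δ 1 g) : Path X 2 where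
  vertex := ![X.δ 1 f, X.δ 1 g, X.δ 0 g]
  arrow := ![f, g]
  arrow_src i := by change X.δ 1 _ = _; fin_cases i <;> simp [h]
  arrow_tgt i := by change X.δ 0 _ = _; fin_cases i <;> simp [h]

/-- Composition of two edges. -/
noncomputable def cmp (f g : X _⦋1⦌) (h : X.δ 0 f = X.δ 1 g) : X _⦋1⦌ :=
  spineToDiagonal (mkPath2 f g h)

lemma cmp_congr {f f' g g' : X _⦋1⦌} (hf : f = f') (hg : g = g') (h : X.δ 0 f = X.δ 1 g) :
    cmp f g h = cmp f' g' (hf ▸ hg ▸ h) := by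
  subst hf; subst hg; rfl

lemma cmp_src (f g : X _⦋1⦌) (h : X.δ 0 f = X.δ 1 g) : X.δ 1 (cmp f g h) = X.δ 1 f := by
  dsimp only [cmp, spineToDiagonal, diagonal, SimplicialObject.δ]
  rw [map_map]
  show X.map (SimplexCategory.δ 1 ≫ mkOfLe 0 2 (Fin.zero_le _)).op _ = _
  rw [δ_one_comp_mkOfLe, spineToSimplex_vertex]
  rfl

lemma cmp_tgt (f g : X _⦋1⦌) (h : X.δ 0 f = X.δ 1 g) : X.δ 0 (cmp f g h) = X.δ 0 g := by
  dsimp only [cmp, spineToDiagonal, diagonal, SimplicialObject.δ]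
  rw [map_map]
  show X.map (SimplexCategory.δ 0 ≫ mkOfLe 0 2 (Fin.zero_le _)).op _ = _
  rw [δ_zero_comp_mkOfLe, spineToSimplex_vertex]
  rfl

lemma spine_mkOfLeComp {n : ℕ} (Δ : X _⦋n⦌) (a b c : Fin (n + 1)) (hab : a ≤ b) (hbc : b ≤ c)
    (h : X.δ 0 (edge Δ a b hab) = X.δ 1 (edge Δ b c hbc)) :
    X.spine 2 (X.map (mkOfLeComp a b c hab hbc).op Δ) = mkPath2 (edge Δ a b hab) (edge Δ b c hbc) h := by
  apply Path.ext'
  intro i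
  fin_cases i
  · show X.map (mkOfSucc 0).op (X.map (mkOfLeComp a b c hab hbc).op Δ) = _
    rw [map_map, mkOfSucc_zero_comp_mkOfLeComp]
    rfl
  · show X.map (mkOfSucc 1).op (X.map (mkOfLeComp a b c hab hbc).op Δ) = _
    rw [map_map, mkOfSucc_one_comp_mkOfLeComp]
    rfl

/-- The key lemma: composition of consecutive edges of a simplex is the long edge. -/
lemma cmp_edge {n : ℕ} (Δ : X _⦋n⦌) (a b c : Fin (n + 1)) (hab : a ≤ b) (hbc : b ≤ c)
    (h : X.δ 0 (edge Δ a b hab) = X.δ 1 (edge Δ b c hbc)) :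
    cmp (edge Δ a b hab) (edge Δ b c hbc) h = edge Δ a c (hab.trans hbc) := by
  dsimp only [cmp, spineToDiagonal]
  rw [← spine_mkOfLeComp Δ a b c hab hbc h, spineToSimplex_spine]
  dsimp only [diagonal, edge]
  rw [map_map, diag_comp_mkOfLeComp]

lemma id_cmp (f : X _⦋1⦌) (h : X.δ 0 (X.σ 0 (X.δ 1 f)) = X.δ 1 f) :
    cmp (X.σ 0 (X.δ 1 f)) f h = f := by
  have e1 : X.σ 0 (X.δ 1 f) = edge f 0 0 le_rfl := by rw [src_eq_vtx, σ_vtx]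
  have e2 : f = edge f 0 1 (by decide) := (edge_self f).symm
  rw [cmp_congr e1 e2, cmp_edge, edge_self]

lemma cmp_id (f : X _⦋1⦌) (h : X.δ 0 f = X.δ 1 (X.σ 0 (X.δ 0 f))) :
    cmp f (X.σ 0 (X.δ 0 f)) h = f := by
  have e1 : f = edge f 0 1 (by decide) := (edge_self f).symm
  have e2 : X.σ 0 (X.δ 0 f) = edge f 1 1 le_rfl := by rw [tgt_eq_vtx, σ_vtx]
  rw [cmp_congr e1 e2, cmp_edge, edge_self]

/-- The path with arrows `f`, `g`, `h`. -/
@[simps]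
def mkPath3 (f g h : X _⦋1⦌) (hfg : X.δ 0 f = X.δ 1 g) (hgh : X.δ 0 g = X.δ 1 h) : Path X 3 where
  vertex := ![X.δ 1 f, X.δ 1 g, X.δ 1 h, X.δ 0 h]
  arrow := ![f, g, h]
  arrow_src i := by
    change X.δ 1 _ = _
    fin_cases i <;> simp [hfg, hgh, show (Fin.castSucc 2 : Fin 4) = 2 from rfl]
  arrow_tgt i := by
    change X.δ 0 _ = _
    fin_cases i <;> simp [hfg, hgh, show (Fin.succ 2 : Fin 4) = 3 from rfl]

lemma cmp_assoc (f g h : X _⦋1⦌) (hfg : X.δ 0 f = X.δ 1 g) (hgh : X.δ 0 g = X.δ 1 h)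
    (h1 : X.δ 0 (cmp f g hfg) = X.δ 1 h) (h2 : X.δ 0 f = X.δ 1 (cmp g h hgh)) :
    cmp (cmp f g hfg) h h1 = cmp f (cmp g h hgh) h2 := by
  set Δ := spineToSimplex (X := X) (mkPath3 f g h hfg hgh) with hΔ
  have e1 : f = edge Δ 0 1 (by decide) := by
    have h0 := spineToSimplex_arrow (X := X) (0 : Fin 3) (mkPath3 f g h hfg hgh)
    rw [mkOfSucc_eq_mkOfLe] at h0
    exact h0.symm
  have e2 : g = edge Δ 1 2 (by decide) := by
    have h0 := spineToSimplex_arrow (X := X) (1 : Fin 3) (mkPath3 f g h hfg hgh)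
    rw [mkOfSucc_eq_mkOfLe] at h0
    exact h0.symm
  have e3 : h = edge Δ 2 3 (by decide) := by
    have h0 := spineToSimplex_arrow (X := X) (2 : Fin 3) (mkPath3 f g h hfg hgh)
    rw [mkOfSucc_eq_mkOfLe] at h0
    exact h0.symm
  calc cmp (cmp f g hfg) h h1
      = cmp (cmp (edge Δ 0 1 (by decide)) (edge Δ 1 2 (by decide)) (by rw [edge_src, edge_tgt]))
          (edge Δ 2 3 (by decide)) (by rw [cmp_tgt, edge_tgt, edge_src]) := by
        rw [cmp_congr (cmp_congr e1 e2 hfg) e3]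
    _ = cmp (edge Δ 0 2 (by decide)) (edge Δ 2 3 (by decide)) (by rw [edge_src, edge_tgt]) := by
        rw [cmp_congr (cmp_edge Δ 0 1 2 (by decide) (by decide) (by rw [edge_src, edge_tgt])) rfl]
    _ = edge Δ 0 3 (by decide) := cmp_edge _ _ _ _ _ _ _
    _ = cmp (edge Δ 0 1 (by decide)) (edge Δ 1 3 (by decide)) (by rw [edge_src, edge_tgt]) :=
        (cmp_edge _ _ _ _ _ _ _).symm
    _ = cmp f (cmp g h hgh) h2 := by
        rw [cmp_congr e1.symm (cmp_edge Δ 1 2 3 (by decide) (by decide)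
          (by rw [edge_src, edge_tgt])).symm, cmp_congr (rfl (a := f)) (cmp_congr e2.symm e3.symm _)]



/-! ### The category structure on `X _⦋0⦌` -/

/-- Morphisms: edges with given endpoints. -/
abbrev SHom (x y : X _⦋0⦌) : Type u :=
  {f : X.obj (Opposite.op (SimplexCategory.mk 1)) // X.δ 1 f = x ∧ X.δ 0 f = y}

/-- Identity. -/
noncomputable def shomId (x : X _⦋0⦌) : SHom x x := ⟨X.σ 0 x, σ_src x, σ_tgt x⟩

/-- Composition. -/
noncomputable def shomComp {x y z : X _⦋0⦌} (f : SHom x y) (g : SHom y z) : SHom x z :=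
  ⟨cmp f.1 g.1 (by rw [f.2.2, g.2.1]), by rw [cmp_src, f.2.1], by rw [cmp_tgt, g.2.2]⟩

lemma shom_id_comp {x y : X _⦋0⦌} (f : SHom x y) : shomComp (shomId x) f = f := by
  apply Subtype.ext
  show cmp (X.σ 0 x) f.1 _ = f.1
  refine (cmp_congr (congrArg (X.σ 0) f.2.1.symm) rfl _).trans ?_
  exact id_cmp f.1 _

lemma shom_comp_id {x y : X _⦋0⦌} (f : SHom x y) : shomComp f (shomId y) = f := by
  apply Subtype.ext
  show cmp f.1 (X.σ 0 y) _ = f.1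
  refine (cmp_congr rfl (congrArg (X.σ 0) f.2.2.symm) _).trans ?_
  exact cmp_id f.1 _

lemma shom_assoc {w x y z : X _⦋0⦌} (f : SHom w x) (g : SHom x y) (h : SHom y z) :
    shomComp (shomComp f g) h = shomComp f (shomComp g h) :=
  Subtype.ext (cmp_assoc f.1 g.1 h.1 _ _ _ _)

noncomputable instance segalCategory : Category.{u, u} (X _⦋0⦌) where
  Hom := SHom
  id := shomId
  comp := shomComp
  id_comp := shom_id_comp
  comp_id := shom_comp_id
  assoc := shom_assoc

lemma hom_val_ext {x y x' y' : X _⦋0⦌} (hx : x = x') (hy : y = y') (f : x ⟶ y) (g : x' ⟶ y')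
    (h : f.1 = g.1) : f = eqToHom hx ≫ g ≫ eqToHom hy.symm := by
  subst hx; subst hy
  simp only [eqToHom_refl, Category.comp_id, Category.id_comp]
  exact Subtype.ext h

lemma id_val (x : X _⦋0⦌) : (𝟙 x : x ⟶ x).1 = X.σ 0 x := rfl

/-! ### The comparison map with the nerve -/

/-- The `n`-simplices of `X` give composable arrows. -/
noncomputable def toFun {n : ℕ} (Δ : X _⦋n⦌) : ComposableArrows (X _⦋0⦌) n where
  obj i := vtx Δ i
  map {i j} hij := ⟨edge Δ i j (leOfHom hij), edge_src Δ i j _, edge_tgt Δ i j _⟩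
  map_id i := by
    apply Subtype.ext
    exact (σ_vtx Δ i).symm
  map_comp {i j k} hij hjk := by
    apply Subtype.ext
    exact (cmp_edge Δ i j k (leOfHom hij) (leOfHom hjk) (by rw [edge_src, edge_tgt])).symm

/-- The path underlying composable arrows. -/
noncomputable def pathOf {n : ℕ} (F : ComposableArrows (X _⦋0⦌) n) : Path X n where
  vertex i := F.obj i
  arrow i := (F.map (homOfLE (Fin.castSucc_le_succ i))).1
  arrow_src i := (F.map (homOfLE (Fin.castSucc_le_succ i))).2.1
  arrow_tgt i := (F.map (homOfLE (Fin.castSucc_le_succ i))).2.2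

noncomputable def fromFun {n : ℕ} (F : ComposableArrows (X _⦋0⦌) n) : X _⦋n⦌ :=
  spineToSimplex (pathOf F)

lemma fromFun_toFun {n : ℕ} (Δ : X _⦋n⦌) : fromFun (toFun Δ) = Δ := by
  have hp : pathOf (toFun Δ) = X.spine n Δ := by
    ext i
    · rfl
    · show edge Δ i.castSucc i.succ _ = X.map (mkOfSucc i).op Δ
      rw [edge, mkOfSucc_eq_mkOfLe]
  rw [fromFun, hp, spineToSimplex_spine]

lemma edge_spineToSimplex {n : ℕ} (p : Path X n) (i : Fin n) :
    edge (spineToSimplex p) i.castSucc i.succ (Fin.castSucc_le_succ i) = p.arrow i := by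
  rw [edge, ← mkOfSucc_eq_mkOfLe, spineToSimplex_arrow]

lemma toFun_fromFun {n : ℕ} (F : ComposableArrows (X _⦋0⦌) n) : toFun (fromFun F) = F := by
  have hobj : ∀ i, (toFun (fromFun F)).obj i = F.obj i :=
    fun i => spineToSimplex_vertex i (pathOf F)
  refine ComposableArrows.ext hobj (fun i hi => ?_)
  exact hom_val_ext (hobj _) (hobj _) _ _ (edge_spineToSimplex (pathOf F) ⟨i, hi⟩)

lemma comp_mkOfLe {n p : ℕ} (ψ : (⦋n⦌ : SimplexCategory) ⟶ ⦋p⦌) (i j : Fin (n + 1)) (h : i ≤ j) :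
    mkOfLe i j h ≫ ψ = mkOfLe (ψ.toOrderHom i) (ψ.toOrderHom j) (ψ.toOrderHom.monotone h) := by
  apply hom1_ext <;> rfl

/-- The natural comparison map from `X` to the nerve. -/
noncomputable def toNerve : X ⟶ nerve (X _⦋0⦌) where
  app m := TypeCat.ofHom (fun Δ => toFun (n := m.unop.len) Δ)
  naturality m m' φ := by
    ext Δ
    have hobj : ∀ i : Fin (m'.unop.len + 1),
        (toFun (n := m'.unop.len) (X.map φ Δ)).obj i
          = (((nerve (X _⦋0⦌)).map φ) (toFun (n := m.unop.len) Δ)).obj i := by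
      intro i
      show X.map (SimplexCategory.const ⦋0⦌ ⦋m'.unop.len⦌ i).op (X.map φ.unop.op Δ)
        = X.map (SimplexCategory.const ⦋0⦌ ⦋m.unop.len⦌ (φ.unop.toOrderHom i)).op Δ
      rw [map_map, SimplexCategory.const_comp]
    refine CategoryTheory.Functor.ext hobj (fun i j hij => ?_)
    refine hom_val_ext (hobj i) (hobj j) _ _ ?_
    show X.map (mkOfLe i j (leOfHom hij)).op (X.map φ.unop.op Δ)
      = X.map (mkOfLe (φ.unop.toOrderHom i) (φ.unop.toOrderHom j)
          (φ.unop.toOrderHom.monotone (leOfHom hij))).op Δ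
    rw [map_map]
    have he : mkOfLe i j (leOfHom hij) ≫ φ.unop
        = mkOfLe (φ.unop.toOrderHom i) (φ.unop.toOrderHom j)
            (φ.unop.toOrderHom.monotone (leOfHom hij)) := hom1_ext _ _ rfl rfl
    rw [he]

end Stmt7Aux

open Stmt7Aux in
/-- A simplicial set whose Segal maps (spine maps) are all bijections is isomorphic to the
nerve of a category whose objects are the `0`-simplices `X_0`. -/
theorem stmt7 (X : SSet.{u}) (_ : SSet.StrictSegal X) :
    ∃ inst : Category.{u, u} (X _⦋0⦌), Nonempty (X ≅ @nerve (X _⦋0⦌) inst) := by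
  letI : SegalStr X := ⟨‹SSet.StrictSegal X›⟩
  refine ⟨segalCategory, ⟨?_⟩⟩
  have : ∀ m, IsIso ((toNerve (X := X)).app m) := fun m =>
    (CategoryTheory.isIso_iff_bijective _).mpr
      (Function.bijective_iff_has_inverse.mpr
        ⟨fromFun (n := m.unop.len), fun Δ => fromFun_toFun (X := X) (n := m.unop.len) Δ, fun F => toFun_fromFun (X := X) (n := m.unop.len) F⟩)
  have : IsIso (toNerve (X := X)) := NatIso.isIso_of_isIso_app _
  exact asIso toNerve
end

section
/- Let X : Δᵒᵖ → Set be a simplicial set satisfying the Segal conditions (so X ≅ nerve of a category C), and suppose in addition that the map (d₂, d₁) : X_2 → X_1 ×_{d₁, X_0, d₁} X_1 (the fiber product taken over the 'target of composite equals target' structure, i.e. pairs of 2-simplex faces sharing the face d₁) is a bijection. Then every morphism of C is invertible, i.e. C is a groupoid. -/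
open CategoryTheory Simplicial

lemma face2_mk₂ {C : Type u} [Category.{v} C] {x y z : C} (f : x ⟶ y) (g : y ⟶ z) :
    (nerve C).map (SimplexCategory.δ 2).op (ComposableArrows.mk₂ f g) =
      ComposableArrows.mk₁ f := by
  exact nerve.δ₂_mk₂_eq f g

lemma face1_mk₂ {C : Type u} [Category.{v} C] {x y z : C} (f : x ⟶ y) (g : y ⟶ z) :
    (nerve C).map (SimplexCategory.δ 1).op (ComposableArrows.mk₂ f g) =
      ComposableArrows.mk₁ (f ≫ g) := by
  exact nerve.δ₁_mk₂_eq f g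

/-- Segal groupoid condition: let `X = nerve C` (a simplicial set satisfying the Segal
conditions).  If the map `(d₂, d₁) : X₂ → X₁ ×_{d₁, X₀, d₁} X₁` is a bijection (stated as:
it is injective and hits every pair of `1`-simplices with the same `d₁`-face), then every
morphism of `C` is invertible, i.e. `C` is a groupoid. -/
theorem stmt8 {C : Type u} [Category.{v} C]
    (hinj : ∀ σ τ : (nerve C) _⦋2⦌,
      (nerve C).map (SimplexCategory.δ 2).op σ = (nerve C).map (SimplexCategory.δ 2).op τ →
      (nerve C).map (SimplexCategory.δ 1).op σ = (nerve C).map (SimplexCategory.δ 1).op τ →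
      σ = τ)
    (hsurj : ∀ f g : (nerve C) _⦋1⦌,
      (nerve C).map (SimplexCategory.δ 1).op f = (nerve C).map (SimplexCategory.δ 1).op g →
      ∃ σ : (nerve C) _⦋2⦌,
        (nerve C).map (SimplexCategory.δ 2).op σ = f ∧
        (nerve C).map (SimplexCategory.δ 1).op σ = g) :
    ∀ ⦃x y : C⦄ (f : x ⟶ y), IsIso f := by
  -- every morphism admits a left inverse
  have key : ∀ ⦃x y : C⦄ (f : x ⟶ y), ∃ h : y ⟶ x, f ≫ h = 𝟙 x := by
    intro x y f
    obtain ⟨σ, h2, h1⟩ := hsurj (ComposableArrows.mk₁ f) (ComposableArrows.mk₁ (𝟙 x))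
      (by
        show (ComposableArrows.mk₁ f).whiskerLeft _ = (ComposableArrows.mk₁ (𝟙 x)).whiskerLeft _
        exact ComposableArrows.ext₀ rfl)
    obtain ⟨X₀, X₁, X₂, a, b, rfl⟩ := ComposableArrows.mk₂_surjective σ
    rw [face2_mk₂] at h2
    rw [face1_mk₂] at h1
    obtain rfl : x = X₀ := (Functor.congr_obj h2 0).symm
    obtain rfl : y = X₁ := (Functor.congr_obj h2 1).symm
    obtain rfl : x = X₂ := (Functor.congr_obj h1 1).symm
    have ha := Functor.congr_hom h2 (homOfLE (show (0 : Fin 2) ≤ 1 by decide))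
    have hab := Functor.congr_hom h1 (homOfLE (show (0 : Fin 2) ≤ 1 by decide))
    simp at ha hab
    change a = 𝟙 x ≫ f ≫ 𝟙 y at ha
    change a ≫ b = 𝟙 x ≫ 𝟙 x ≫ 𝟙 x at hab
    simp only [Category.id_comp, Category.comp_id] at ha hab
    exact ⟨b, ha ▸ hab⟩
  intro x y f
  obtain ⟨b, hb⟩ := key f
  obtain ⟨c, hc⟩ := key b
  have : c = f := by
    have : f ≫ b ≫ c = c := by rw [← Category.assoc, hb, Category.id_comp]
    rw [hc, Category.comp_id] at this
    exact this.symm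
  exact ⟨b, hb, by rw [← this]; exact hc⟩
end

section
/- Let R → S be a faithfully flat morphism of commutative rings and M an R-module. Then the Amitsur complex 0 → M → M ⊗_R S → M ⊗_R S ⊗_R S is exact: the map M → M ⊗_R S, m ↦ m ⊗ 1, is injective, and its image is exactly the equalizer of the two maps M ⊗_R S → M ⊗_R S ⊗_R S given by m ⊗ s ↦ m ⊗ 1 ⊗ s and m ⊗ s ↦ m ⊗ s ⊗ 1. -/
open TensorProduct

/-- Exactness of the beginning of the Amitsur complex for a faithfully flat ring map `R → S`
and an `R`-module `M`: the map `M → M ⊗_R S`, `m ↦ m ⊗ 1`, is injective, and its image is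
the equalizer of the two maps `M ⊗ S → M ⊗ S ⊗ S` given by `m ⊗ s ↦ (m ⊗ 1) ⊗ s` and
`m ⊗ s ↦ (m ⊗ s) ⊗ 1`. -/
theorem stmt9 {R S M : Type*} [CommRing R] [CommRing S] [Algebra R S]
    [AddCommGroup M] [Module R M] [Module.FaithfullyFlat R S] :
    Function.Injective ((TensorProduct.mk R M S).flip 1) ∧
      Set.range ((TensorProduct.mk R M S).flip 1) =
        {x : M ⊗[R] S |
          LinearMap.rTensor S ((TensorProduct.mk R M S).flip 1) x =
            (TensorProduct.mk R (M ⊗[R] S) S).flip 1 x} := by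
  set f : M →ₗ[R] M ⊗[R] S := (TensorProduct.mk R M S).flip 1 with hf
  set d2 : M ⊗[R] S →ₗ[R] (M ⊗[R] S) ⊗[R] S := (TensorProduct.mk R (M ⊗[R] S) S).flip 1 with hd2
  set g : M ⊗[R] S →ₗ[R] (M ⊗[R] S) ⊗[R] S := f.rTensor S - d2 with hg
  let h1 : (M ⊗[R] S) ⊗[R] S →ₗ[R] M ⊗[R] S :=
    (LinearMap.lTensor M (LinearMap.mul' R S)) ∘ₗ (TensorProduct.assoc R M S S).toLinearMap
  let h2 : ((M ⊗[R] S) ⊗[R] S) ⊗[R] S →ₗ[R] (M ⊗[R] S) ⊗[R] S :=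
    (LinearMap.lTensor (M ⊗[R] S) (LinearMap.mul' R S)) ∘ₗ
      (TensorProduct.assoc R (M ⊗[R] S) S S).toLinearMap
  have h1f : ∀ (m : M) (s : S), h1 ((f.rTensor S) (m ⊗ₜ[R] s)) = m ⊗ₜ[R] s := by
    intro m s
    simp [h1, hf, f]
  have h1_retr : ∀ x : M ⊗[R] S, h1 ((f.rTensor S) x) = x := by
    intro x
    induction x using TensorProduct.induction_on with
    | zero => simp
    | tmul m s => exact h1f m s
    | add x y hx hy => simp [map_add, hx, hy]
  have key : ∀ x : (M ⊗[R] S) ⊗[R] S,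
      (f.rTensor S) (h1 x) - h2 ((g.rTensor S) x) = x := by
    intro x
    induction x using TensorProduct.induction_on with
    | zero => simp
    | tmul y s =>
      induction y using TensorProduct.induction_on with
      | zero => simp
      | tmul m t =>
        have hgmt : g (m ⊗ₜ[R] t) = (m ⊗ₜ[R] (1:S)) ⊗ₜ[R] t - (m ⊗ₜ[R] t) ⊗ₜ[R] (1:S) := by
          simp [hg, hf, hd2, f, d2]
        rw [LinearMap.rTensor_tmul, hgmt, sub_tmul, map_sub]
        simp [h1, h2, f, hf, mul_comm t s]
      | add y z hy hz =>
        simp only [add_tmul, map_add]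
        rw [add_sub_add_comm, hy, hz]
    | add x y hx hy =>
      simp only [map_add]
      rw [add_sub_add_comm, hx, hy]
  have hgf : g ∘ₗ f = 0 := by
    ext m
    simp [hg, hf, hd2, f, d2]
  have exactT : Function.Exact (f.rTensor S) (g.rTensor S) := by
    intro x
    constructor
    · intro hx
      refine ⟨h1 x, ?_⟩
      have := key x
      rw [hx, map_zero, sub_zero] at this
      exact this
    · rintro ⟨y, rfl⟩
      rw [← LinearMap.comp_apply, ← LinearMap.rTensor_comp, hgf, LinearMap.rTensor_zero,
        LinearMap.zero_apply]
  have exact0 : Function.Exact f g :=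
    Module.FaithfullyFlat.rTensor_reflects_exact R S f g exactT
  have exactT0 : Function.Exact ((0 : M →ₗ[R] M).rTensor S) (f.rTensor S) := by
    intro x
    rw [LinearMap.rTensor_zero]
    constructor
    · intro hx
      refine ⟨0, ?_⟩
      have : x = 0 := by rw [← h1_retr x, hx, map_zero]
      simp [this]
    · rintro ⟨y, rfl⟩
      simp
  have inj0 : Function.Exact (0 : M →ₗ[R] M) f :=
    Module.FaithfullyFlat.rTensor_reflects_exact R S 0 f exactT0
  constructor
  · show Function.Injective f
    rw [← LinearMap.ker_eq_bot, LinearMap.exact_iff.mp inj0, LinearMap.range_zero]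
  · ext x
    have := (exact0 x).symm
    rw [hg, LinearMap.sub_apply, sub_eq_zero] at this
    show x ∈ Set.range ⇑f ↔ (LinearMap.rTensor S f) x = d2 x
    exact this
end
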